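/- arXiv:1811.10255 — 3 statements merged into one kernel-verified Lean document; each statement's English description precedes it below -/
import Mathlib

section
/- Let $1/2 < \delta \le 1$, $x \in \mathbb{C}$ with $a_x := \mathcal{R}e(x) > 0$, $\beta > 1$, $e > 0$, and $F^{\delta}_{k+1,n}(x) := \prod_{m=k+1}^n (1 - x m^{-\delta})$ (for $m_0 \le k \le n$, with $m_0$ large enough). Then $\sum_{k=m_0}^{n} k^{-\beta} |F^{\delta}_{k+1,n}(x)|^{e}$ is: $O(n^{-(\beta-\delta)})$ if $1/2 < \delta < 1$; $O(n^{-e a_x})$ if $\delta = 1$ and $e a_x < \beta - 1$; $O(n^{-(\beta-1)} \ln n)$ if $\delta = 1$ and $e a_x = \beta - 1$; and $O(n^{-(\beta-1)})$ if $\delta = 1$ and $e a_x > \beta - 1$. -/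
/-!
For real `t`, `|1 - x t|² = 1 - 2 a_x t + |x|² t² ≤ exp (-2 a_x t + |x|² t²)`, and `∑ m ^ (-2δ)`
converges for `δ > 1/2`; hence `|F^δ_{k+1,n}(x)| ^ e ≤ C exp (-e a_x ∑_{m=k+1}^n m ^ (-δ))`
uniformly in `k ≤ n`.

For `δ = 1` the harmonic bounds `log (n + 1) ≤ H_n ≤ 1 + log n` turn this into
`C' (k / n) ^ (e a_x)`, so the sum is `O(n ^ (-e a_x) ∑_{k ≤ n} k ^ (e a_x - β))`, and the
three regimes `e a_x - β < -1`, `= -1`, `> -1` of this power sum give the three cases.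

For `δ < 1` it suffices that `∑_{m=k+1}^n m ^ (-δ) ≥ (n - k) n ^ (-δ)`. The terms with `2k < n`
are then `O(exp (-(e a_x / 2) n ^ (1 - δ)))`, which beats every power of `n`; for `2k ≥ n`
we have `k ^ (-β) ≤ 2 ^ β n ^ (-β)`, and the factors `exp (-e a_x n ^ (-δ) (n - k))` form a
geometric series of total size `O(n ^ δ)`.
-/

open Finset Filter Asymptotics

/-- `F^δ_{k+1,n}(x) = ∏_{m=k+1}^n (1 - x m^{-δ})`. -/
noncomputable def Fprod (x : ℂ) (δ : ℝ) (k n : ℕ) : ℂ :=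
  ∏ m ∈ Finset.Icc (k + 1) n, (1 - x * ((((m : ℝ) ^ δ)⁻¹ : ℝ) : ℂ))

open Real

lemma isBigO_of_eventually_le {α : Type*} {l : Filter α} {f g : α → ℝ} (hf : ∀ a, 0 ≤ f a)
    (h : ∀ᶠ a in l, f a ≤ g a) : f =O[l] g :=
  IsBigO.of_bound' <| h.mono fun a ha => by
    rw [norm_of_nonneg (hf a)]
    exact ha.trans (le_abs_self _)

lemma sum_Icc_le_sum_Icc_one {f : ℕ → ℝ} (hf : ∀ k, 0 ≤ f k) (h0 : f 0 = 0) (m n : ℕ) :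
    ∑ k ∈ Icc m n, f k ≤ ∑ k ∈ Icc 1 n, f k :=
  calc ∑ k ∈ Icc m n, f k ≤ ∑ k ∈ Icc 0 n, f k :=
        sum_le_sum_of_subset_of_nonneg (Icc_subset_Icc_left m.zero_le) fun k _ _ => hf k
    _ = ∑ k ∈ Icc 1 n, f k := by
        rw [← insert_Icc_add_one_left_eq_Icc n.zero_le, sum_insert (by simp), h0, zero_add,
          zero_add]

lemma sum_Icc_one_le_sub_of_le {g F : ℕ → ℝ} (h : ∀ k, g (k + 1) ≤ F (k + 1) - F k) (n : ℕ) :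
    ∑ k ∈ Icc 1 n, g k ≤ F n - F 0 := by
  induction n with
  | zero => simp
  | succ n ih => rw [sum_Icc_succ_top (by omega)]; linarith [h n]

lemma mul_rpow_sub_one_le_rpow_sub_rpow {p t : ℝ} (hp₀ : 0 ≤ p) (hp₁ : p ≤ 1) (ht : 1 ≤ t) :
    p * t ^ (p - 1) ≤ t ^ p - (t - 1) ^ p := by
  have ht₀ : 0 < t := by linarith
  have hinv : t⁻¹ ≤ 1 := inv_le_one_of_one_le₀ ht
  have hbern := rpow_one_add_le_one_add_mul_self (s := -t⁻¹) (by linarith) hp₀ hp₁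
  have hsplit : t - 1 = t * (1 + -t⁻¹) := by field_simp; ring
  rw [hsplit, mul_rpow ht₀.le (by linarith), rpow_sub_one ht₀.ne', div_eq_mul_inv]
  nlinarith [mul_le_mul_of_nonneg_left hbern (rpow_nonneg ht₀.le p)]

lemma sum_Icc_one_rpow_le {γ : ℝ} (hγ : -1 < γ) (n : ℕ) :
    ∑ k ∈ Icc 1 n, (k : ℝ) ^ γ ≤ max 1 (γ + 1)⁻¹ * (n : ℝ) ^ (γ + 1) := by
  have hp : 0 < γ + 1 := by linarith
  rcases le_or_gt 0 γ with hγ₀ | hγ₀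
  · calc ∑ k ∈ Icc 1 n, (k : ℝ) ^ γ ≤ ∑ _k ∈ Icc 1 n, (n : ℝ) ^ γ :=
          sum_le_sum fun k hk =>
            rpow_le_rpow k.cast_nonneg (by exact_mod_cast (mem_Icc.mp hk).2) hγ₀
      _ = (n : ℝ) ^ (γ + 1) := by
          rw [sum_const, Nat.card_Icc, add_tsub_cancel_right, nsmul_eq_mul,
            rpow_add_one' n.cast_nonneg hp.ne', mul_comm]
      _ ≤ max 1 (γ + 1)⁻¹ * (n : ℝ) ^ (γ + 1) :=
          le_mul_of_one_le_left (by positivity) (le_max_left _ _)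
  · have hstep (k : ℕ) : ((k + 1 : ℕ) : ℝ) ^ γ ≤
        ((k + 1 : ℕ) : ℝ) ^ (γ + 1) / (γ + 1) - (k : ℝ) ^ (γ + 1) / (γ + 1) := by
      have h := mul_rpow_sub_one_le_rpow_sub_rpow hp.le (by linarith)
        (by exact_mod_cast Nat.le_add_left 1 k : (1 : ℝ) ≤ ((k + 1 : ℕ) : ℝ))
      rw [add_sub_cancel_right] at h
      push_cast at h ⊢
      rw [add_sub_cancel_right] at h
      rw [← sub_div, le_div_iff₀ hp]
      linarith
    calc ∑ k ∈ Icc 1 n, (k : ℝ) ^ γ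
        ≤ (n : ℝ) ^ (γ + 1) / (γ + 1) - ((0 : ℕ) : ℝ) ^ (γ + 1) / (γ + 1) :=
          sum_Icc_one_le_sub_of_le (F := fun k => (k : ℝ) ^ (γ + 1) / (γ + 1)) hstep n
      _ = (γ + 1)⁻¹ * (n : ℝ) ^ (γ + 1) := by
          rw [Nat.cast_zero, zero_rpow hp.ne', zero_div, sub_zero, div_eq_inv_mul]
      _ ≤ max 1 (γ + 1)⁻¹ * (n : ℝ) ^ (γ + 1) := by gcongr; exact le_max_right _ _

lemma isBigO_sum_Icc_one_rpow_of_lt_neg_one {γ : ℝ} (hγ : γ < -1) :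
    (fun n : ℕ => ∑ k ∈ Icc 1 n, (k : ℝ) ^ γ) =O[atTop] fun _ => (1 : ℝ) :=
  isBigO_of_le' (c := ∑' k : ℕ, (k : ℝ) ^ γ) _ fun n => by
    rw [norm_one, mul_one, norm_of_nonneg (sum_nonneg fun k _ => by positivity)]
    exact (summable_nat_rpow.mpr hγ).sum_le_tsum _ fun k _ => by positivity

lemma isBigO_sum_Icc_one_rpow_neg_one :
    (fun n : ℕ => ∑ k ∈ Icc 1 n, (k : ℝ) ^ (-1 : ℝ)) =O[atTop] fun n => log n := by
  have hle (n : ℕ) : ∑ k ∈ Icc 1 n, (k : ℝ) ^ (-1 : ℝ) ≤ 1 + log n := by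
    simpa [harmonic_eq_sum_Icc, rpow_neg_one] using harmonic_le_one_add_log n
  have hlog : (fun x : ℝ => 1 + log x) =O[atTop] log :=
    isLittleO_const_log_atTop.isBigO.add (isBigO_refl _ _)
  exact (isBigO_of_eventually_le (fun n => sum_nonneg fun k _ => by positivity)
    (Eventually.of_forall hle)).trans (hlog.comp_tendsto tendsto_natCast_atTop_atTop)

lemma isBigO_sum_Icc_one_rpow_of_neg_one_lt {γ : ℝ} (hγ : -1 < γ) :
    (fun n : ℕ => ∑ k ∈ Icc 1 n, (k : ℝ) ^ γ) =O[atTop] fun n => (n : ℝ) ^ (γ + 1) :=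
  (isBigO_of_eventually_le (fun n => sum_nonneg fun k _ => by positivity)
    (Eventually.of_forall (sum_Icc_one_rpow_le hγ))).trans (isBigO_const_mul_self _ _ _)

lemma sum_exp_neg_mul_sub_le {u : ℝ} (hu : 0 < u) {n : ℕ} {s : Finset ℕ} (hs : ∀ k ∈ s, k ≤ n) :
    ∑ k ∈ s, exp (-u * (n - k)) ≤ 1 + u⁻¹ := by
  have hr₀ : 0 ≤ exp (-u) := (exp_pos _).le
  have hr₁ : exp (-u) < 1 := exp_lt_one_iff.mpr (by linarith)
  have hgeom : ∑ k ∈ range (n + 1), exp (-u * (n - k)) ≤ (1 - exp (-u))⁻¹ := by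
    have hpow : ∀ k ∈ range (n + 1), exp (-u * (n - k)) = exp (-u) ^ (n + 1 - 1 - k) :=
      fun k hk => by
        rw [Nat.add_sub_cancel, ← exp_nat_mul, Nat.cast_sub (Nat.lt_succ_iff.mp (mem_range.mp hk))]
        ring_nf
    rw [sum_congr rfl hpow, sum_range_reflect (fun j => exp (-u) ^ j), range_eq_Ico]
    simpa using geom_sum_Ico_le_of_lt_one (m := 0) (n := n + 1) hr₀ hr₁
  have hbound : (1 - exp (-u))⁻¹ ≤ 1 + u⁻¹ := by
    have hr : exp (-u) * (1 + u) ≤ 1 := by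
      calc exp (-u) * (1 + u) ≤ exp (-u) * exp u := by gcongr; linarith [add_one_le_exp u]
        _ = 1 := by rw [← exp_add, neg_add_cancel, exp_zero]
    calc (1 - exp (-u))⁻¹ ≤ (u / (1 + u))⁻¹ := by
          refine inv_anti₀ (by positivity) ?_
          rw [div_le_iff₀ (by linarith)]
          nlinarith
      _ = 1 + u⁻¹ := by field_simp; ring
  refine le_trans ?_ (hgeom.trans hbound)
  exact sum_le_sum_of_subset_of_nonneg (fun k hk => mem_range.mpr (Nat.lt_succ_of_le (hs k hk)))
    fun k _ _ => (exp_pos _).le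

lemma sum_Icc_one_rpow_inv_mul_exp_le {β u : ℝ} (hβ : 1 < β) (hu : 0 < u) (n : ℕ) :
    ∑ k ∈ Icc 1 n, ((k : ℝ) ^ β)⁻¹ * exp (-u * (n - k)) ≤
      (∑' k : ℕ, ((k : ℝ) ^ β)⁻¹) * exp (-u * n / 2) + 2 ^ β * (1 + u⁻¹) * ((n : ℝ) ^ β)⁻¹ := by
  rw [← sum_filter_add_sum_filter_not (Icc 1 n) (fun k => 2 * k < n)]
  gcongr ?_ + ?_
  · calc ∑ k ∈ Icc 1 n with 2 * k < n, ((k : ℝ) ^ β)⁻¹ * exp (-u * (n - k))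
        ≤ ∑ k ∈ Icc 1 n with 2 * k < n, ((k : ℝ) ^ β)⁻¹ * exp (-u * n / 2) := by
          gcongr with k hk
          have hk : (2 * k : ℝ) < n := by exact_mod_cast (mem_filter.mp hk).2
          nlinarith
      _ = (∑ k ∈ Icc 1 n with 2 * k < n, ((k : ℝ) ^ β)⁻¹) * exp (-u * n / 2) := by
          rw [sum_mul]
      _ ≤ (∑' k : ℕ, ((k : ℝ) ^ β)⁻¹) * exp (-u * n / 2) := by
          gcongr
          exact (summable_nat_rpow_inv.mpr hβ).sum_le_tsum _ fun k _ => by positivity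
  · calc ∑ k ∈ Icc 1 n with ¬2 * k < n, ((k : ℝ) ^ β)⁻¹ * exp (-u * (n - k))
        ≤ ∑ k ∈ Icc 1 n with ¬2 * k < n, 2 ^ β * ((n : ℝ) ^ β)⁻¹ * exp (-u * (n - k)) := by
          gcongr with k hk
          obtain ⟨hk, hnk⟩ := mem_filter.mp hk
          obtain ⟨hk₁, hkn⟩ := mem_Icc.mp hk
          have hn : (n : ℝ) ≤ 2 * k := by exact_mod_cast not_lt.mp hnk
          have hn₀ : (0 : ℝ) < n := by exact_mod_cast hk₁.trans hkn
          calc ((k : ℝ) ^ β)⁻¹ = 2 ^ β * ((2 * k : ℝ) ^ β)⁻¹ := by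
                rw [mul_rpow zero_le_two k.cast_nonneg, mul_inv, ← mul_assoc,
                  mul_inv_cancel₀ (by positivity), one_mul]
            _ ≤ 2 ^ β * ((n : ℝ) ^ β)⁻¹ := by gcongr
      _ = 2 ^ β * ((n : ℝ) ^ β)⁻¹ * ∑ k ∈ Icc 1 n with ¬2 * k < n, exp (-u * (n - k)) := by
          rw [mul_sum]
      _ ≤ 2 ^ β * ((n : ℝ) ^ β)⁻¹ * (1 + u⁻¹) := by
          gcongr
          exact sum_exp_neg_mul_sub_le hu fun k hk => (mem_Icc.mp (mem_filter.mp hk).1).2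
      _ = 2 ^ β * (1 + u⁻¹) * ((n : ℝ) ^ β)⁻¹ := by ring

lemma isLittleO_exp_neg_mul_natCast_rpow {a b : ℝ} (ha : 0 < a) (hb : 0 < b) (s : ℝ) :
    (fun n : ℕ => exp (-a * (n : ℝ) ^ b)) =o[atTop] fun n => (n : ℝ) ^ s := by
  refine ((isLittleO_exp_neg_mul_rpow_atTop ha (s / b)).comp_tendsto
    ((tendsto_rpow_atTop hb).comp tendsto_natCast_atTop_atTop)).congr_right fun n => ?_
  rw [Function.comp_apply, Function.comp_apply, ← rpow_mul n.cast_nonneg, mul_div_cancel₀ _ hb.ne']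

lemma isBigO_sum_Icc_one_rpow_inv_mul_exp {β δ c : ℝ} (hβ : 1 < β) (hδ₀ : 0 ≤ δ) (hδ₁ : δ < 1)
    (hc : 0 < c) :
    (fun n : ℕ => ∑ k ∈ Icc 1 n, ((k : ℝ) ^ β)⁻¹ * exp (-(c * (n : ℝ) ^ (-δ)) * (n - k)))
      =O[atTop] fun n => (n : ℝ) ^ (-(β - δ)) := by
  set Z := ∑' k : ℕ, ((k : ℝ) ^ β)⁻¹
  have hle : ∀ᶠ n : ℕ in atTop,
      ∑ k ∈ Icc 1 n, ((k : ℝ) ^ β)⁻¹ * exp (-(c * (n : ℝ) ^ (-δ)) * (n - k)) ≤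
        Z * exp (-(c / 2) * (n : ℝ) ^ (1 - δ)) + 2 ^ β * (1 + c⁻¹) * (n : ℝ) ^ (-(β - δ)) := by
    filter_upwards [eventually_ge_atTop 1] with n hn
    have hn₀ : (0 : ℝ) < n := by exact_mod_cast hn
    have hP : 1 ≤ (n : ℝ) ^ δ := one_le_rpow (by exact_mod_cast hn) hδ₀
    refine (sum_Icc_one_rpow_inv_mul_exp_le hβ (by positivity) n).trans (add_le_add
      (le_of_eq ?_) ?_)
    · congr 2
      rw [rpow_sub hn₀, rpow_neg hn₀.le, rpow_one]
      ring
    · rw [neg_sub, rpow_sub hn₀, rpow_neg hn₀.le, mul_inv, inv_inv, div_eq_mul_inv]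
      have hQ : 0 ≤ ((n : ℝ) ^ β)⁻¹ := by positivity
      have hc' : 0 ≤ c⁻¹ := by positivity
      have h2 : (0 : ℝ) ≤ 2 ^ β := by positivity
      have key : (1 + c⁻¹ * (n : ℝ) ^ δ) * ((n : ℝ) ^ β)⁻¹ ≤
          (1 + c⁻¹) * ((n : ℝ) ^ δ * ((n : ℝ) ^ β)⁻¹) := by
        nlinarith [mul_nonneg (sub_nonneg.mpr hP) hQ]
      calc 2 ^ β * (1 + c⁻¹ * (n : ℝ) ^ δ) * ((n : ℝ) ^ β)⁻¹
          = 2 ^ β * ((1 + c⁻¹ * (n : ℝ) ^ δ) * ((n : ℝ) ^ β)⁻¹) := by ring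
        _ ≤ 2 ^ β * ((1 + c⁻¹) * ((n : ℝ) ^ δ * ((n : ℝ) ^ β)⁻¹)) := by gcongr
        _ = _ := by ring
  refine (isBigO_of_eventually_le (fun n => sum_nonneg fun k _ => by positivity) hle).trans ?_
  exact ((isLittleO_exp_neg_mul_natCast_rpow (by positivity) (by linarith) _).isBigO.const_mul_left
    Z).add (isBigO_const_mul_self _ _ _)

lemma norm_one_sub_mul_ofReal_le (x : ℂ) (t : ℝ) :
    ‖1 - x * t‖ ≤ exp (-x.re * t + ‖x‖ ^ 2 * t ^ 2 / 2) := by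
  have hsq : ‖1 - x * t‖ ^ 2 = (-2 * x.re * t + ‖x‖ ^ 2 * t ^ 2) + 1 := by
    rw [Complex.sq_norm, Complex.sq_norm, Complex.normSq_apply, Complex.normSq_apply]
    simp only [Complex.sub_re, Complex.one_re, Complex.mul_re, Complex.ofReal_re,
      Complex.ofReal_im, Complex.sub_im, Complex.one_im, Complex.mul_im]
    ring
  rw [← pow_le_pow_iff_left₀ (norm_nonneg _) (exp_pos _).le two_ne_zero, hsq, ← exp_nat_mul]
  refine (add_one_le_exp _).trans_eq ?_
  push_cast
  ring_nf

lemma exists_norm_Fprod_rpow_le (x : ℂ) {δ e : ℝ} (hδ : 1 / 2 < δ) (he : 0 ≤ e) :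
    ∃ C, 0 ≤ C ∧ ∀ k n : ℕ, ‖Fprod x δ k n‖ ^ e ≤
      C * exp (-(e * x.re) * ∑ m ∈ Icc (k + 1) n, ((m : ℝ) ^ δ)⁻¹) := by
  set Z := ∑' m : ℕ, ((m : ℝ) ^ (2 * δ))⁻¹
  have hsq (m : ℕ) : (((m : ℝ) ^ δ)⁻¹) ^ 2 = ((m : ℝ) ^ (2 * δ))⁻¹ := by
    rw [inv_pow, ← rpow_natCast, ← rpow_mul m.cast_nonneg, mul_comm]
    norm_num
  refine ⟨exp (e * ‖x‖ ^ 2 / 2 * Z), (exp_pos _).le, fun k n => ?_⟩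
  set S₁ := ∑ m ∈ Icc (k + 1) n, ((m : ℝ) ^ δ)⁻¹
  set S₂ := ∑ m ∈ Icc (k + 1) n, (((m : ℝ) ^ δ)⁻¹) ^ 2
  have hS₂ : S₂ ≤ Z := by
    simp_rw [S₂, hsq]
    exact (summable_nat_rpow_inv.mpr (by linarith)).sum_le_tsum _ fun m _ => by positivity
  have hprod : ‖Fprod x δ k n‖ ≤ exp (-x.re * S₁ + ‖x‖ ^ 2 / 2 * S₂) := by
    have hsum : -x.re * S₁ + ‖x‖ ^ 2 / 2 * S₂ = ∑ m ∈ Icc (k + 1) n,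
        (-x.re * ((m : ℝ) ^ δ)⁻¹ + ‖x‖ ^ 2 * (((m : ℝ) ^ δ)⁻¹) ^ 2 / 2) := by
      simp only [S₁, S₂, mul_sum, sum_add_distrib]
      congr 1
      exact sum_congr rfl fun m _ => by ring
    rw [Fprod, norm_prod, hsum, exp_sum]
    exact prod_le_prod (fun m _ => norm_nonneg _) fun m _ => norm_one_sub_mul_ofReal_le x _
  calc ‖Fprod x δ k n‖ ^ e ≤ exp (-x.re * S₁ + ‖x‖ ^ 2 / 2 * S₂) ^ e :=
        rpow_le_rpow (norm_nonneg _) hprod he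
    _ = exp (-(e * x.re) * S₁ + e * ‖x‖ ^ 2 / 2 * S₂) := by rw [← exp_mul]; ring_nf
    _ ≤ exp (-(e * x.re) * S₁ + e * ‖x‖ ^ 2 / 2 * Z) := by gcongr
    _ = exp (e * ‖x‖ ^ 2 / 2 * Z) * exp (-(e * x.re) * S₁) := by rw [← exp_add]; ring_nf

lemma log_sub_log_sub_one_le_sum_inv {k n : ℕ} (hkn : k ≤ n) :
    log n - log k - 1 ≤ ∑ m ∈ Icc (k + 1) n, (m : ℝ)⁻¹ := by
  have hH (j : ℕ) : (harmonic j : ℝ) = ∑ m ∈ Icc 1 j, (m : ℝ)⁻¹ := by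
    simp [harmonic_eq_sum_Icc]
  have hsplit : ∑ m ∈ Icc 1 n, (m : ℝ)⁻¹ =
      ∑ m ∈ Icc 1 k, (m : ℝ)⁻¹ + ∑ m ∈ Icc (k + 1) n, (m : ℝ)⁻¹ := by
    have hIoc (j : ℕ) : Icc 1 j = Ioc 0 j := Icc_add_one_left_eq_Ioc 0 j
    rw [hIoc, hIoc, Icc_add_one_left_eq_Ioc, sum_Ioc_consecutive _ k.zero_le hkn]
  have hlow := log_add_one_le_harmonic n
  have hupp := harmonic_le_one_add_log k
  have hmono : log n ≤ log ↑(n + 1) := by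
    rcases n.eq_zero_or_pos with rfl | hn
    · simp
    · exact log_le_log (by exact_mod_cast hn) (by push_cast; linarith)
  rw [hH] at hlow hupp
  linarith

lemma sub_mul_rpow_neg_le_sum_rpow_inv {δ : ℝ} (hδ : 0 ≤ δ) {k n : ℕ} (hkn : k ≤ n) :
    ((n : ℝ) - k) * (n : ℝ) ^ (-δ) ≤ ∑ m ∈ Icc (k + 1) n, ((m : ℝ) ^ δ)⁻¹ := by
  have hcard : ((#(Icc (k + 1) n) : ℕ) : ℝ) = n - k := by
    rw [Nat.card_Icc, Nat.add_sub_add_right, Nat.cast_sub hkn]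
  rw [← hcard, ← nsmul_eq_mul]
  refine card_nsmul_le_sum _ _ _ fun m hm => ?_
  obtain ⟨hm₁, hmn⟩ := mem_Icc.mp hm
  have hm₀ : (0 : ℝ) < m := by exact_mod_cast (Nat.succ_pos k).trans_le hm₁
  rw [rpow_neg (by positivity)]
  gcongr

lemma isBigO_sum_norm_Fprod_one {x : ℂ} {β e : ℝ} (hx : 0 ≤ x.re) (he : 0 ≤ e) (hβ : β ≠ 0)
    (m₀ : ℕ) :
    (fun n : ℕ => ∑ k ∈ Icc m₀ n, ((k : ℝ) ^ β)⁻¹ * ‖Fprod x 1 k n‖ ^ e) =O[atTop]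
      fun n => (n : ℝ) ^ (-(e * x.re)) * ∑ k ∈ Icc 1 n, (k : ℝ) ^ (e * x.re - β) := by
  obtain ⟨C, hC₀, hC⟩ := exists_norm_Fprod_rpow_le x (δ := 1) (by norm_num) he
  set c := e * x.re
  have hc : 0 ≤ c := mul_nonneg he hx
  have hterm (n : ℕ) : ∀ k ∈ Icc 1 n, ((k : ℝ) ^ β)⁻¹ * ‖Fprod x 1 k n‖ ^ e ≤
      C * exp c * ((n : ℝ) ^ (-c) * (k : ℝ) ^ (c - β)) := by
    intro k hk
    obtain ⟨hk₁, hkn⟩ := mem_Icc.mp hk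
    have hk₀ : (0 : ℝ) < k := by exact_mod_cast hk₁
    have hn₀ : (0 : ℝ) < n := by exact_mod_cast hk₁.trans hkn
    have hS := log_sub_log_sub_one_le_sum_inv hkn
    have hexp : exp (-c * ∑ m ∈ Icc (k + 1) n, ((m : ℝ) ^ (1 : ℝ))⁻¹) ≤
        exp c * ((n : ℝ) ^ (-c) * (k : ℝ) ^ c) := by
      rw [rpow_def_of_pos hn₀, rpow_def_of_pos hk₀, ← exp_add, ← exp_add]
      simp only [rpow_one]
      gcongr
      nlinarith
    calc ((k : ℝ) ^ β)⁻¹ * ‖Fprod x 1 k n‖ ^ e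
        ≤ ((k : ℝ) ^ β)⁻¹ * (C * (exp c * ((n : ℝ) ^ (-c) * (k : ℝ) ^ c))) := by
          gcongr
          exact (hC k n).trans (by gcongr)
      _ = C * exp c * ((n : ℝ) ^ (-c) * (k : ℝ) ^ (c - β)) := by
          rw [rpow_sub hk₀]
          ring
  have hle (n : ℕ) : ∑ k ∈ Icc m₀ n, ((k : ℝ) ^ β)⁻¹ * ‖Fprod x 1 k n‖ ^ e ≤
      C * exp c * ((n : ℝ) ^ (-c) * ∑ k ∈ Icc 1 n, (k : ℝ) ^ (c - β)) := by
    calc _ ≤ ∑ k ∈ Icc 1 n, ((k : ℝ) ^ β)⁻¹ * ‖Fprod x 1 k n‖ ^ e :=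
          sum_Icc_le_sum_Icc_one (fun k => by positivity) (by simp [zero_rpow hβ]) m₀ n
      _ ≤ ∑ k ∈ Icc 1 n, C * exp c * ((n : ℝ) ^ (-c) * (k : ℝ) ^ (c - β)) :=
          sum_le_sum (hterm n)
      _ = _ := by rw [← mul_sum, ← mul_sum]
  exact (isBigO_of_eventually_le (fun n => sum_nonneg fun k _ => by positivity)
    (Eventually.of_forall hle)).trans (isBigO_const_mul_self _ _ _)

lemma isBigO_sum_norm_Fprod_of_lt_one {x : ℂ} {δ β e : ℝ} (hδ : 1 / 2 < δ) (hδ₁ : δ < 1)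
    (hx : 0 < x.re) (hβ : 1 < β) (he : 0 < e) (m₀ : ℕ) :
    (fun n : ℕ => ∑ k ∈ Icc m₀ n, ((k : ℝ) ^ β)⁻¹ * ‖Fprod x δ k n‖ ^ e) =O[atTop]
      fun n => (n : ℝ) ^ (-(β - δ)) := by
  obtain ⟨C, hC₀, hC⟩ := exists_norm_Fprod_rpow_le x hδ he.le
  set c := e * x.re
  have hc : 0 < c := mul_pos he hx
  have hle (n : ℕ) : ∑ k ∈ Icc m₀ n, ((k : ℝ) ^ β)⁻¹ * ‖Fprod x δ k n‖ ^ e ≤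
      C * ∑ k ∈ Icc 1 n, ((k : ℝ) ^ β)⁻¹ * exp (-(c * (n : ℝ) ^ (-δ)) * (n - k)) := by
    calc _ ≤ ∑ k ∈ Icc 1 n, ((k : ℝ) ^ β)⁻¹ * ‖Fprod x δ k n‖ ^ e :=
          sum_Icc_le_sum_Icc_one (fun k => by positivity)
            (by simp [zero_rpow (by linarith : β ≠ 0)]) m₀ n
      _ ≤ ∑ k ∈ Icc 1 n, ((k : ℝ) ^ β)⁻¹ * (C * exp (-(c * (n : ℝ) ^ (-δ)) * (n - k))) := by
          gcongr with k hk
          refine (hC k n).trans ?_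
          have hS := sub_mul_rpow_neg_le_sum_rpow_inv (δ := δ) (by linarith) (mem_Icc.mp hk).2
          gcongr C * exp ?_
          nlinarith
      _ = _ := by
          rw [mul_sum]
          exact sum_congr rfl fun k _ => by ring
  exact (isBigO_of_eventually_le (fun n => sum_nonneg fun k _ => by positivity)
    (Eventually.of_forall hle)).trans
    ((isBigO_sum_Icc_one_rpow_inv_mul_exp hβ (by linarith) hδ₁ hc).const_mul_left C)

theorem stmt9_general (δ : ℝ) (hδ₁ : 1 / 2 < δ) (x : ℂ) (hx : 0 < x.re)
    (β e : ℝ) (hβ : 1 < β) (he : 0 < e)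
    (m₀ : ℕ) :
    (δ < 1 →
      (fun n : ℕ => ∑ k ∈ Icc m₀ n, ((k : ℝ) ^ β)⁻¹ * ‖Fprod x δ k n‖ ^ e)
        =O[atTop] fun n : ℕ => (n : ℝ) ^ (-(β - δ))) ∧
    (δ = 1 → e * x.re < β - 1 →
      (fun n : ℕ => ∑ k ∈ Icc m₀ n, ((k : ℝ) ^ β)⁻¹ * ‖Fprod x δ k n‖ ^ e)
        =O[atTop] fun n : ℕ => (n : ℝ) ^ (-(e * x.re))) ∧
    (δ = 1 → e * x.re = β - 1 →
      (fun n : ℕ => ∑ k ∈ Icc m₀ n, ((k : ℝ) ^ β)⁻¹ * ‖Fprod x δ k n‖ ^ e)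
        =O[atTop] fun n : ℕ => (n : ℝ) ^ (-(β - 1)) * Real.log n) ∧
    (δ = 1 → β - 1 < e * x.re →
      (fun n : ℕ => ∑ k ∈ Icc m₀ n, ((k : ℝ) ^ β)⁻¹ * ‖Fprod x δ k n‖ ^ e)
        =O[atTop] fun n : ℕ => (n : ℝ) ^ (-(β - 1))) := by
  refine ⟨fun hδ => isBigO_sum_norm_Fprod_of_lt_one hδ₁ hδ hx hβ he m₀, ?_, ?_, ?_⟩ <;>
    rintro rfl hc <;>
    refine (isBigO_sum_norm_Fprod_one hx.le he.le (by linarith) m₀).trans ?_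
  · simpa only [mul_one] using (isBigO_refl _ _).mul
      (isBigO_sum_Icc_one_rpow_of_lt_neg_one (γ := e * x.re - β) (by linarith))
  · rw [show e * x.re - β = -1 by linarith, hc]
    exact (isBigO_refl _ _).mul isBigO_sum_Icc_one_rpow_neg_one
  · refine ((isBigO_refl _ _).mul (isBigO_sum_Icc_one_rpow_of_neg_one_lt
      (γ := e * x.re - β) (by linarith))).trans_eventuallyEq ?_
    filter_upwards [eventually_gt_atTop 0] with n hn
    rw [← rpow_add (by exact_mod_cast hn)]
    ring_nf

theorem stmt9 (δ : ℝ) (hδ₁ : 1 / 2 < δ) (hδ₂ : δ ≤ 1) (x : ℂ) (hx : 0 < x.re)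
    (β e : ℝ) (hβ : 1 < β) (he : 0 < e)
    (m₀ : ℕ) (hm₀ : 2 ≤ m₀)
    (hsmall : ∀ m : ℕ, m₀ ≤ m → x.re * ((m : ℝ) ^ δ)⁻¹ < 1) :
    (δ < 1 →
      (fun n : ℕ => ∑ k ∈ Icc m₀ n, ((k : ℝ) ^ β)⁻¹ * ‖Fprod x δ k n‖ ^ e)
        =O[atTop] fun n : ℕ => (n : ℝ) ^ (-(β - δ))) ∧
    (δ = 1 → e * x.re < β - 1 →
      (fun n : ℕ => ∑ k ∈ Icc m₀ n, ((k : ℝ) ^ β)⁻¹ * ‖Fprod x δ k n‖ ^ e)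
        =O[atTop] fun n : ℕ => (n : ℝ) ^ (-(e * x.re))) ∧
    (δ = 1 → e * x.re = β - 1 →
      (fun n : ℕ => ∑ k ∈ Icc m₀ n, ((k : ℝ) ^ β)⁻¹ * ‖Fprod x δ k n‖ ^ e)
        =O[atTop] fun n : ℕ => (n : ℝ) ^ (-(β - 1)) * Real.log n) ∧
    (δ = 1 → β - 1 < e * x.re →
      (fun n : ℕ => ∑ k ∈ Icc m₀ n, ((k : ℝ) ^ β)⁻¹ * ‖Fprod x δ k n‖ ^ e)
        =O[atTop] fun n : ℕ => (n : ℝ) ^ (-(β - 1))) :=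
  stmt9_general δ hδ₁ x hx β e hβ he m₀
end

section
/- Let $1/2 < \nu < 1$ and $q > 0$, define $F^{\nu}_{k+1,n-1}(q) := \prod_{m=k+1}^{n-1}(1 - q m^{-\nu})$ for $m_0 \le k \le n-1$ (with $m_0$ such that $q m^{-\nu} < 1$ for $m \ge m_0$). Then $\lim_{n\to\infty} n^{\nu} \sum_{k=m_0}^{n-1} q^2 k^{-2\nu} F^{\nu}_{k+1,n-1}(q)^2 = q/2$. -/
/-!
Write `S n` for the sum and `g m = 1 - q m^{-ν}`. Peeling off the top index gives
`S (n+1) = g n ^ 2 * S n + q^2 n^{-2ν}`, so `a n = n^ν S n` satisfies a linear recurrence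
`a (n+1) = c n * a n + d n` with `n^ν (1 - c n) → 2q` and `n^ν d n → q^2`. Such a recurrence is a
weighted average of `a n` and `d n / (1 - c n) → q / 2`, and since `∑ (1 - c n) ≍ ∑ n^{-ν}`
diverges, the weight of the initial terms `∏ c m` dies out and `a n → q / 2`.
The key asymptotic input is `(n+1)^ν - n^ν → 0` for `ν < 1`.
-/

open Finset Filter Topology

section LinearRecurrence

variable {a c d : ℕ → ℝ} {L : ℝ}

lemma tendsto_sum_Ico_atTop_of_not_summable {f : ℕ → ℝ} {N : ℕ} (hf : ∀ n ≥ N, 0 ≤ f n)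
    (hdiv : ¬Summable f) : Tendsto (fun n => ∑ m ∈ Ico N n, f m) atTop atTop := by
  have hshift : ¬Summable fun m => f (m + N) := (summable_nat_add_iff N).not.mpr hdiv
  have hsum := (not_summable_iff_tendsto_nat_atTop_of_nonneg fun m => hf (m + N) (by omega)).mp
    hshift
  refine (hsum.comp (tendsto_sub_atTop_nat N)).congr fun n => ?_
  simp [sum_Ico_eq_sum_range, add_comm]

lemma tendsto_prod_Ico_zero_of_not_summable {N : ℕ} (hc : ∀ n ≥ N, 0 ≤ c n ∧ c n ≤ 1)
    (hdiv : ¬Summable fun n => 1 - c n) : Tendsto (fun n => ∏ m ∈ Ico N n, c m) atTop (𝓝 0) := by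
  have hexp : Tendsto (fun n => Real.exp (-∑ m ∈ Ico N n, (1 - c m))) atTop (𝓝 0) :=
    Real.tendsto_exp_atBot.comp <| tendsto_neg_atTop_atBot.comp <|
      tendsto_sum_Ico_atTop_of_not_summable (fun n hn => sub_nonneg.mpr (hc n hn).2) hdiv
  refine squeeze_zero (fun n => prod_nonneg fun m hm => (hc m (mem_Ico.mp hm).1).1)
    (fun n => ?_) hexp
  rw [← sum_neg_distrib, Real.exp_sum]
  exact prod_le_prod (fun m hm => (hc m (mem_Ico.mp hm).1).1)
    fun m _ => by linarith [Real.add_one_le_exp (-(1 - c m))]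

lemma abs_sub_le_of_linear_recurrence {N : ℕ} {ε : ℝ} (hc : ∀ n ≥ N, 0 ≤ c n ∧ c n < 1)
    (hrec : ∀ n ≥ N, a (n + 1) = c n * a n + d n) (hd : ∀ n ≥ N, |d n / (1 - c n) - L| ≤ ε) :
    ∀ n ≥ N, |a n - L| ≤ ε + |a N - L| * ∏ m ∈ Ico N n, c m := by
  intro n hn
  induction n, hn using Nat.le_induction with
  | base => simp [(abs_nonneg _).trans (hd N le_rfl)]
  | succ n hn ih =>
    obtain ⟨hc0, hc1⟩ := hc n hn
    have hdecomp : a (n + 1) - L = c n * (a n - L) + (1 - c n) * (d n / (1 - c n) - L) := by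
      have hne : 1 - c n ≠ 0 := by linarith
      rw [hrec n hn]
      field_simp
      ring
    calc |a (n + 1) - L| ≤ c n * |a n - L| + (1 - c n) * ε := by
          rw [hdecomp]
          refine (abs_add_le _ _).trans ?_
          rw [abs_mul, abs_mul, abs_of_nonneg hc0, abs_of_nonneg (sub_nonneg.mpr hc1.le)]
          gcongr
          exact hd n hn
      _ ≤ c n * (ε + |a N - L| * ∏ m ∈ Ico N n, c m) + (1 - c n) * ε := by gcongr
      _ = ε + |a N - L| * ∏ m ∈ Ico N (n + 1), c m := by
          rw [prod_Ico_succ_top hn]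
          ring

theorem tendsto_of_linear_recurrence (hc : ∀ᶠ n in atTop, 0 ≤ c n ∧ c n < 1)
    (hdiv : ¬Summable fun n => 1 - c n)
    (hrec : ∀ᶠ n in atTop, a (n + 1) = c n * a n + d n)
    (hlim : Tendsto (fun n => d n / (1 - c n)) atTop (𝓝 L)) :
    Tendsto a atTop (𝓝 L) := by
  rw [Metric.tendsto_atTop]
  intro ε hε
  have hd := (Metric.tendsto_nhds.mp hlim) (ε / 2) (by positivity)
  obtain ⟨N, hN⟩ := (hc.and (hrec.and hd)).exists_forall_of_atTop
  have hbound := abs_sub_le_of_linear_recurrence (fun n hn => (hN n hn).1)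
    (fun n hn => (hN n hn).2.1) fun n hn => (hN n hn).2.2.le
  have hprod := (tendsto_prod_Ico_zero_of_not_summable
    (fun n hn => ⟨(hN n hn).1.1, (hN n hn).1.2.le⟩) hdiv).const_mul |a N - L|
  rw [mul_zero] at hprod
  obtain ⟨M, hM⟩ := (hprod.eventually (gt_mem_nhds (half_pos hε))).exists_forall_of_atTop
  refine ⟨max N M, fun n hn => ?_⟩
  rw [Real.dist_eq]
  linarith [hbound n (le_of_max_le_left hn), hM n (le_of_max_le_right hn)]

end LinearRecurrence

lemma sum_mul_prod_Ico_succ {R : Type*} [CommSemiring R] (w h : ℕ → R) {m₀ n : ℕ}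
    (hn : m₀ ≤ n) :
    ∑ k ∈ Ico m₀ (n + 1), w k * ∏ m ∈ Ico (k + 1) (n + 1), h m =
      h n * ∑ k ∈ Ico m₀ n, w k * ∏ m ∈ Ico (k + 1) n, h m + w n := by
  rw [sum_Ico_succ_top hn, Ico_self, prod_empty, mul_one, mul_sum]
  congr 1
  refine sum_congr rfl fun k hk => ?_
  rw [prod_Ico_succ_top (mem_Ico.mp hk).2]
  ring

lemma tendsto_rpow_add_one_sub_rpow {ν : ℝ} (hν0 : 0 ≤ ν) (hν1 : ν < 1) :
    Tendsto (fun x : ℝ => (x + 1) ^ ν - x ^ ν) atTop (𝓝 0) := by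
  have hupper : Tendsto (fun x : ℝ => x ^ (ν - 1)) atTop (𝓝 0) := by
    simpa using tendsto_rpow_neg_atTop (by linarith : 0 < 1 - ν)
  refine tendsto_of_tendsto_of_tendsto_of_le_of_le' tendsto_const_nhds hupper ?_ ?_
  · filter_upwards [eventually_ge_atTop 0] with x hx
    exact sub_nonneg.mpr (Real.rpow_le_rpow hx (by linarith) hν0)
  · filter_upwards [eventually_gt_atTop 0] with x hx
    have hratio : ((x + 1) / x) ^ ν ≤ ((x + 1) / x) ^ (1 : ℝ) :=
      Real.rpow_le_rpow_of_exponent_le ((one_le_div hx).mpr (by linarith)) hν1.le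
    rw [Real.rpow_one, Real.div_rpow (by linarith) hx.le, div_le_div_iff₀ (by positivity) hx]
      at hratio
    rw [Real.rpow_sub_one hx.ne', le_div_iff₀ hx]
    nlinarith

lemma not_summable_of_tendsto_rpow_mul {f : ℕ → ℝ} {ν l : ℝ} (hν : ν ≤ 1) (hl : 0 < l)
    (hf : Tendsto (fun n : ℕ => (n : ℝ) ^ ν * f n) atTop (𝓝 l)) : ¬Summable f := by
  intro hsum
  have hbound : ∀ᶠ n : ℕ in atTop, ‖l / 2 * ((n : ℝ) ^ ν)⁻¹‖ ≤ f n := by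
    filter_upwards [hf.eventually (lt_mem_nhds (half_lt_self hl)), eventually_ne_atTop 0]
      with n hn hn0
    have hx : 0 < (n : ℝ) ^ ν := Real.rpow_pos_of_pos (by positivity) ν
    rw [Real.norm_of_nonneg (by positivity), ← div_eq_mul_inv, div_le_iff₀ hx]
    linarith
  have := (summable_mul_left_iff (half_pos hl).ne').mp (hsum.of_norm_bounded_eventually_nat hbound)
  linarith [Real.summable_nat_rpow_inv.mp this]

section Covariance

variable {ν : ℝ} (q : ℝ)

-- `Ico _ n` rather than the statement's `Icc _ (n - 1)` avoids truncated subtraction at `n = 0`.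
noncomputable def normalizedCov (ν q : ℝ) (m₀ n : ℕ) : ℝ :=
  (n : ℝ) ^ ν * ∑ k ∈ Ico m₀ n,
    q ^ 2 * ((k : ℝ) ^ (2 * ν))⁻¹ * ∏ m ∈ Ico (k + 1) n, (1 - q * ((m : ℝ) ^ ν)⁻¹) ^ 2

noncomputable def covCoeff (ν q : ℝ) (n : ℕ) : ℝ :=
  ((n : ℝ) + 1) ^ ν / (n : ℝ) ^ ν * (1 - q * ((n : ℝ) ^ ν)⁻¹) ^ 2

noncomputable def covForcing (ν q : ℝ) (n : ℕ) : ℝ :=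
  ((n : ℝ) + 1) ^ ν * (q ^ 2 * ((n : ℝ) ^ (2 * ν))⁻¹)

lemma normalizedCov_succ {m₀ n : ℕ} (hm₀ : m₀ ≤ n) (hn : n ≠ 0) :
    normalizedCov ν q m₀ (n + 1) = covCoeff ν q n * normalizedCov ν q m₀ n + covForcing ν q n := by
  have hx : (n : ℝ) ^ ν ≠ 0 := (Real.rpow_pos_of_pos (by positivity) ν).ne'
  simp only [normalizedCov, covCoeff, covForcing, sum_mul_prod_Ico_succ _ _ hm₀]
  push_cast
  field_simp

lemma rpow_mul_sum_Icc_eq_normalizedCov (m₀ : ℕ) {n : ℕ} (hn : n ≠ 0) :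
    (n : ℝ) ^ ν * ∑ k ∈ Icc m₀ (n - 1), q ^ 2 * ((k : ℝ) ^ (2 * ν))⁻¹ *
      (∏ m ∈ Icc (k + 1) (n - 1), (1 - q * ((m : ℝ) ^ ν)⁻¹)) ^ 2 = normalizedCov ν q m₀ n := by
  have hIcc : ∀ a, Icc a (n - 1) = Ico a n := fun a => by ext; simp; omega
  simp only [normalizedCov, hIcc, prod_pow]

lemma tendsto_rpow_mul_one_sub_covCoeff (hν0 : 0 < ν) (hν1 : ν < 1) :
    Tendsto (fun n : ℕ => (n : ℝ) ^ ν * (1 - covCoeff ν q n)) atTop (𝓝 (2 * q)) := by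
  have hinv : Tendsto (fun n : ℕ => ((n : ℝ) ^ ν)⁻¹) atTop (𝓝 0) :=
    tendsto_inv_atTop_zero.comp ((tendsto_rpow_atTop hν0).comp tendsto_natCast_atTop_atTop)
  have hgap := (tendsto_rpow_add_one_sub_rpow hν0.le hν1).comp tendsto_natCast_atTop_atTop
  have hlim := ((tendsto_const_nhds (x := 2 * q)).sub (hinv.const_mul (q ^ 2))).sub
    (hgap.mul (((tendsto_const_nhds (x := (1 : ℝ))).sub (hinv.const_mul q)).pow 2))
  simp only [mul_zero, sub_zero, zero_mul] at hlim
  refine hlim.congr' ?_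
  filter_upwards [eventually_ne_atTop 0] with n hn
  have hx : (n : ℝ) ^ ν ≠ 0 := (Real.rpow_pos_of_pos (by positivity) ν).ne'
  simp only [covCoeff, Function.comp]
  field_simp
  ring

lemma tendsto_rpow_mul_covForcing (hν0 : 0 < ν) (hν1 : ν < 1) :
    Tendsto (fun n : ℕ => (n : ℝ) ^ ν * covForcing ν q n) atTop (𝓝 (q ^ 2)) := by
  have hinv : Tendsto (fun n : ℕ => ((n : ℝ) ^ ν)⁻¹) atTop (𝓝 0) :=
    tendsto_inv_atTop_zero.comp ((tendsto_rpow_atTop hν0).comp tendsto_natCast_atTop_atTop)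
  have hgap := (tendsto_rpow_add_one_sub_rpow hν0.le hν1).comp tendsto_natCast_atTop_atTop
  have hlim := ((tendsto_const_nhds (x := (1 : ℝ))).add (hgap.mul hinv)).const_mul (q ^ 2)
  simp only [mul_zero, add_zero, mul_one] at hlim
  refine hlim.congr' ?_
  filter_upwards [eventually_ne_atTop 0] with n hn
  have hx : (n : ℝ) ^ ν ≠ 0 := (Real.rpow_pos_of_pos (by positivity) ν).ne'
  have hsq : (n : ℝ) ^ (2 * ν) = ((n : ℝ) ^ ν) ^ 2 := by
    rw [mul_comm, Real.rpow_mul (Nat.cast_nonneg n), Real.rpow_two]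
  simp only [covForcing, Function.comp, hsq]
  field_simp
  ring

end Covariance

theorem stmt18_general (ν q : ℝ) (hν₁ : 1 / 2 < ν) (hν₂ : ν < 1) (hq : 0 < q)
    (m₀ : ℕ) :
    Tendsto (fun n : ℕ => (n : ℝ) ^ ν *
        ∑ k ∈ Icc m₀ (n - 1),
          q ^ 2 * ((k : ℝ) ^ (2 * ν))⁻¹ *
            (∏ m ∈ Icc (k + 1) (n - 1), (1 - q * ((m : ℝ) ^ ν)⁻¹)) ^ 2)
      atTop (nhds (q / 2)) := by
  have hν₀ : 0 < ν := by linarith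
  have hgap := tendsto_rpow_mul_one_sub_covCoeff q hν₀ hν₂
  have hcontract : ∀ᶠ n in atTop, 0 ≤ covCoeff ν q n ∧ covCoeff ν q n < 1 := by
    filter_upwards [hgap.eventually (lt_mem_nhds (by linarith : 0 < 2 * q))] with n hn
    refine ⟨by unfold covCoeff; positivity, ?_⟩
    linarith [pos_of_mul_pos_right hn (Real.rpow_nonneg (Nat.cast_nonneg n) ν)]
  have hrec : ∀ᶠ n in atTop, normalizedCov ν q m₀ (n + 1) =
      covCoeff ν q n * normalizedCov ν q m₀ n + covForcing ν q n := by
    filter_upwards [eventually_ge_atTop m₀, eventually_ne_atTop 0] with n hm₀ hn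
    exact normalizedCov_succ q hm₀ hn
  have hlim : Tendsto (fun n => covForcing ν q n / (1 - covCoeff ν q n)) atTop (𝓝 (q / 2)) := by
    have hratio := (tendsto_rpow_mul_covForcing q hν₀ hν₂).div hgap (by positivity)
    rw [show q ^ 2 / (2 * q) = q / 2 by field_simp] at hratio
    refine hratio.congr' ?_
    filter_upwards [eventually_ne_atTop 0] with n hn
    exact mul_div_mul_left _ _ (Real.rpow_pos_of_pos (by positivity) ν).ne'
  refine (tendsto_of_linear_recurrence hcontract
    (not_summable_of_tendsto_rpow_mul hν₂.le (by positivity) hgap) hrec hlim).congr' ?_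
  filter_upwards [eventually_ne_atTop 0] with n hn
  exact (rpow_mul_sum_Icc_eq_normalizedCov q m₀ hn).symm

theorem stmt18 (ν q : ℝ) (hν₁ : 1 / 2 < ν) (hν₂ : ν < 1) (hq : 0 < q)
    (m₀ : ℕ) (hm₀ : 2 ≤ m₀)
    (hsmall : ∀ m : ℕ, m₀ ≤ m → q * ((m : ℝ) ^ ν)⁻¹ < 1) :
    Tendsto (fun n : ℕ => (n : ℝ) ^ ν *
        ∑ k ∈ Icc m₀ (n - 1),
          q ^ 2 * ((k : ℝ) ^ (2 * ν))⁻¹ *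
            (∏ m ∈ Icc (k + 1) (n - 1), (1 - q * ((m : ℝ) ^ ν)⁻¹)) ^ 2)
      atTop (nhds (q / 2)) :=
  stmt18_general ν q hν₁ hν₂ hq m₀
end

section
/- Let $1/2 < \gamma < \nu = 1$, $c, q > 0$ with $q > 1/2$, and define $F^{1}_{k+1,n-1}(q) := \prod_{m=k+1}^{n-1}(1 - q/m)$ for $m_0 \le k \le n-1$. Then $\lim_{n\to\infty} n^{2\gamma - 1} \sum_{k=m_0}^{n-1} c^2 k^{-2\gamma} F^{1}_{k+1,n-1}(q)^2 = \frac{c^2}{2q - (2\gamma - 1)}$. -/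
open Finset Filter Asymptotics

open scoped Nat Topology

/-!
Put `P k = ∏_{m₀ ≤ m ≤ k} (1 - q/m)`, so that the inner product is `P (n-1) / P k`.
Euler's limit formula for `Γ(m₀ - q)` gives `P k ~ C k^(-q)` with `C = (m₀-1)!/Γ(m₀ - q)`, hence
the summand `c² k^(-2γ) / (P k)²` is asymptotic to `(c²/C²) k^ρ` with `ρ = 2q - 2γ > -1`.
A Stolz–Cesàro comparison with the telescoping sum of `(k+1)^(ρ+1) - k^(ρ+1)` gives
`∑_{k<n} (c²/C²) k^ρ ~ (c²/C²) n^(ρ+1)/(ρ+1)`, and the prefactor `n^(2γ-1) P(n-1)²` is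
asymptotic to `C² n^(-(ρ+1))`.
-/

theorem tendsto_sum_range_div_sum_range {f g : ℕ → ℝ} {A : ℝ} (hg : ∀ k, 0 ≤ g k)
    (hg_ne : ∀ᶠ k in atTop, g k ≠ 0)
    (hsum : Tendsto (fun n ↦ ∑ k ∈ range n, g k) atTop atTop)
    (hfg : Tendsto (fun k ↦ f k / g k) atTop (𝓝 A)) :
    Tendsto (fun n ↦ (∑ k ∈ range n, f k) / ∑ k ∈ range n, g k) atTop (𝓝 A) := by
  have hsmall : (fun k ↦ f k - A * g k) =o[atTop] g := by
    rw [isLittleO_iff_tendsto' (hg_ne.mono fun k hk h ↦ absurd h hk)]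
    refine (sub_self A ▸ hfg.sub_const A).congr' ?_
    filter_upwards [hg_ne] with k hk
    field_simp
  have hdiv := ((hsmall.sum_range hg hsum).tendsto_div_nhds_zero.add_const A)
  rw [zero_add] at hdiv
  refine hdiv.congr' ?_
  filter_upwards [hsum.eventually_gt_atTop 0] with n hn
  rw [sum_sub_distrib, ← mul_sum]
  field_simp
  ring

theorem tendsto_rpow_add_one_sub_rpow_div (a : ℝ) :
    Tendsto (fun k : ℕ ↦ (((k : ℝ) + 1) ^ a - (k : ℝ) ^ a) / (k : ℝ) ^ (a - 1)) atTop (𝓝 a) := by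
  have hderiv : HasDerivAt (fun x : ℝ ↦ x ^ a) a 1 := by
    simpa using Real.hasDerivAt_rpow_const (x := 1) (p := a) (Or.inl one_ne_zero)
  have hinv : Tendsto (fun k : ℕ ↦ (k : ℝ)⁻¹) atTop (𝓝[≠] 0) :=
    tendsto_nhdsWithin_iff.2 ⟨tendsto_inv_atTop_nhds_zero_nat,
      (eventually_ne_atTop 0).mono fun k hk ↦ by simpa using hk⟩
  refine ((hasDerivAt_iff_tendsto_slope_zero.1 hderiv).comp hinv).congr' ?_
  filter_upwards [eventually_gt_atTop 0] with k hk
  have hk : (0 : ℝ) < k := by exact_mod_cast hk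
  have hsplit : (k : ℝ) + 1 = k * (1 + (k : ℝ)⁻¹) := by field_simp
  simp only [Function.comp_apply, smul_eq_mul, inv_inv, Real.one_rpow]
  rw [hsplit, Real.mul_rpow hk.le (by positivity), Real.rpow_sub_one hk.ne']
  field_simp

theorem tendsto_sum_range_rpow_div_rpow {ρ : ℝ} (hρ : -1 < ρ) :
    Tendsto (fun n : ℕ ↦ (∑ k ∈ range n, (k : ℝ) ^ ρ) / (n : ℝ) ^ (ρ + 1)) atTop
      (𝓝 (ρ + 1)⁻¹) := by
  have ha : 0 < ρ + 1 := by linarith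
  have htel : ∀ n : ℕ, ∑ k ∈ range n, (((k : ℝ) + 1) ^ (ρ + 1) - (k : ℝ) ^ (ρ + 1))
      = (n : ℝ) ^ (ρ + 1) := fun n ↦ by
    simpa [Real.zero_rpow ha.ne'] using sum_range_sub (fun k : ℕ ↦ (k : ℝ) ^ (ρ + 1)) n
  have hmono : ∀ k : ℕ, (k : ℝ) ^ (ρ + 1) < ((k : ℝ) + 1) ^ (ρ + 1) := fun k ↦
    Real.rpow_lt_rpow (Nat.cast_nonneg k) (lt_add_one _) ha
  have hratio := (tendsto_rpow_add_one_sub_rpow_div (ρ + 1)).inv₀ ha.ne'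
  simp only [add_sub_cancel_right, inv_div] at hratio
  have h := tendsto_sum_range_div_sum_range (fun k ↦ (sub_pos.2 (hmono k)).le)
    (Eventually.of_forall fun k ↦ (sub_pos.2 (hmono k)).ne')
    (by simp only [htel]; exact (tendsto_rpow_atTop ha).comp tendsto_natCast_atTop_atTop) hratio
  simpa only [htel] using h

theorem tendsto_sum_range_div_rpow_of_tendsto_div_rpow {f : ℕ → ℝ} {ρ A : ℝ} (hρ : -1 < ρ)
    (hf : Tendsto (fun k ↦ f k / (k : ℝ) ^ ρ) atTop (𝓝 A)) :
    Tendsto (fun n : ℕ ↦ (∑ k ∈ range n, f k) / (n : ℝ) ^ (ρ + 1)) atTop (𝓝 (A / (ρ + 1))) := by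
  have ha : 0 < ρ + 1 := by linarith
  have hpow := tendsto_sum_range_rpow_div_rpow hρ
  have hsum : Tendsto (fun n : ℕ ↦ ∑ k ∈ range n, (k : ℝ) ^ ρ) atTop atTop := by
    refine (hpow.pos_mul_atTop (inv_pos.2 ha)
      ((tendsto_rpow_atTop ha).comp tendsto_natCast_atTop_atTop)).congr' ?_
    filter_upwards [eventually_gt_atTop 0] with n hn
    have : (0 : ℝ) < (n : ℝ) ^ (ρ + 1) := by positivity
    simp only [Function.comp_apply]
    field_simp
  have hratio := tendsto_sum_range_div_sum_range (fun k ↦ Real.rpow_nonneg k.cast_nonneg ρ)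
    ((eventually_gt_atTop 0).mono fun k hk ↦ by positivity) hsum hf
  rw [div_eq_mul_inv]
  refine (hratio.mul hpow).congr' ?_
  filter_upwards [hsum.eventually_gt_atTop 0] with n hn
  exact div_mul_div_cancel₀ hn.ne'

theorem prod_Icc_one_sub_div_mul_GammaSeq {q : ℝ} {m₀ : ℕ} (hm₀ : 1 ≤ m₀) (hq : q < m₀) (N : ℕ) :
    (∏ m ∈ Icc m₀ (N + m₀), (1 - q / m)) * Real.GammaSeq (m₀ - q) N
      = (m₀ - 1)! * ((N : ℝ) ^ ((m₀ : ℝ) - q) * N ! / (N + m₀)!) := by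
  have hreindex : ∀ u : ℕ → ℝ, ∏ m ∈ Icc m₀ (N + m₀), u m = ∏ j ∈ range (N + 1), u (m₀ + j) := by
    intro u
    rw [← Ico_add_one_right_eq_Icc, prod_Ico_eq_prod_range, N.add_right_comm, Nat.add_sub_cancel]
  have hfactorial : ((m₀ - 1)! : ℝ) * ∏ j ∈ range (N + 1), ((m₀ + j : ℕ) : ℝ) = (N + m₀)! := by
    have h := Nat.factorial_mul_ascFactorial (m₀ - 1) (N + 1)
    rw [Nat.ascFactorial_eq_prod_range, Nat.sub_add_cancel hm₀,
      show m₀ - 1 + (N + 1) = N + m₀ by omega] at h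
    exact_mod_cast h
  have hshift : ∏ j ∈ range (N + 1), ((m₀ : ℝ) - q + j) ≠ 0 :=
    prod_ne_zero_iff.2 fun j _ ↦ (add_pos_of_pos_of_nonneg (sub_pos.2 hq) j.cast_nonneg).ne'
  have hone_sub : ∀ m ∈ Icc m₀ (N + m₀), 1 - q / m = ((m : ℝ) - q) / m := fun m hm ↦ by
    have : (m : ℝ) ≠ 0 := Nat.cast_ne_zero.2 (by have := (mem_Icc.1 hm).1; omega)
    field_simp
  rw [prod_congr rfl hone_sub, prod_div_distrib, hreindex, hreindex, ← hfactorial, Real.GammaSeq]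
  have hnum : ∏ j ∈ range (N + 1), (((m₀ + j : ℕ) : ℝ) - q)
      = ∏ j ∈ range (N + 1), ((m₀ : ℝ) - q + j) := prod_congr rfl fun j _ ↦ by push_cast; ring
  have hnat : ∏ j ∈ range (N + 1), ((m₀ + j : ℕ) : ℝ) ≠ 0 :=
    prod_ne_zero_iff.2 fun j _ ↦ Nat.cast_ne_zero.2 (by omega)
  rw [hnum]
  field_simp

theorem tendsto_natCast_add_div_natCast (x : ℝ) :
    Tendsto (fun n : ℕ ↦ ((n : ℝ) + x) / n) atTop (𝓝 1) := by
  simpa using (tendsto_natCast_div_add_atTop x).inv₀ one_ne_zero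

theorem tendsto_rpow_mul_factorial_div_factorial_add (m : ℕ) (q : ℝ) :
    Tendsto (fun N : ℕ ↦ (N : ℝ) ^ ((m : ℝ) - q) * N ! / (N + m)! * ((N + m : ℕ) : ℝ) ^ q)
      atTop (𝓝 1) := by
  have hnum := ((tendsto_natCast_add_div_natCast m).rpow_const (p := q) (Or.inl one_ne_zero))
  have hden := tendsto_finsetProd (range m) fun j _ ↦ tendsto_natCast_add_div_natCast (1 + j)
  rw [Real.one_rpow] at hnum
  rw [prod_const_one] at hden
  refine (div_one (1 : ℝ) ▸ hnum.div hden one_ne_zero).congr' ?_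
  filter_upwards [eventually_gt_atTop 0] with N hN
  have hN : (0 : ℝ) < N := by exact_mod_cast hN
  have hfactorial : ((N + m)! : ℝ) = N ! * ∏ j ∈ range m, ((N : ℝ) + (1 + j)) := by
    rw [← Nat.factorial_mul_ascFactorial, Nat.ascFactorial_eq_prod_range]
    push_cast
    simp only [add_assoc]
  simp only [Pi.div_apply]
  rw [hfactorial, prod_div_distrib, prod_const, card_range, Real.div_rpow (by positivity) hN.le,
    Real.rpow_sub hN, Real.rpow_natCast]
  push_cast
  field_simp

theorem tendsto_prod_Icc_one_sub_div_mul_rpow {q : ℝ} {m₀ : ℕ} (hm₀ : 1 ≤ m₀) (hq : q < m₀) :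
    Tendsto (fun k : ℕ ↦ (∏ m ∈ Icc m₀ k, (1 - q / m)) * (k : ℝ) ^ q) atTop
      (𝓝 ((m₀ - 1)! / Real.Gamma (m₀ - q))) := by
  rw [← tendsto_add_atTop_iff_nat m₀]
  have hGammaSeq := Real.GammaSeq_tendsto_Gamma (m₀ - q)
  have hGamma : Real.Gamma (m₀ - q) ≠ 0 := (Real.Gamma_pos_of_pos (sub_pos.2 hq)).ne'
  have h := ((tendsto_rpow_mul_factorial_div_factorial_add m₀ q).const_mul
    ((m₀ - 1)! : ℝ)).div hGammaSeq hGamma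
  rw [mul_one] at h
  refine h.congr' ?_
  filter_upwards [hGammaSeq.eventually_ne hGamma] with N hN
  simp only [Pi.div_apply]
  rw [div_eq_iff hN]
  linear_combination -((N + m₀ : ℕ) : ℝ) ^ q * prod_Icc_one_sub_div_mul_GammaSeq hm₀ hq N

theorem prod_Icc_mul_prod_Icc_add_one {M : Type*} [CommMonoid M] (f : ℕ → M) {a b c : ℕ}
    (hab : a ≤ b + 1) (hbc : b ≤ c) :
    (∏ i ∈ Icc a b, f i) * ∏ i ∈ Icc (b + 1) c, f i = ∏ i ∈ Icc a c, f i := by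
  simp only [← Ico_add_one_right_eq_Icc]
  exact prod_Ico_consecutive f hab (by omega)

theorem sum_Icc_mul_prod_Icc_pow {g w : ℕ → ℝ} {m₀ n : ℕ} (p : ℕ) (hg : ∀ m, m₀ ≤ m → g m ≠ 0)
    (hn : 0 < n) :
    ∑ k ∈ Icc m₀ (n - 1), w k * (∏ m ∈ Icc (k + 1) (n - 1), g m) ^ p
      = (∏ m ∈ Icc m₀ (n - 1), g m) ^ p *
          ∑ k ∈ range n, if m₀ ≤ k then w k / (∏ m ∈ Icc m₀ k, g m) ^ p else 0 := by
  have hprod : ∀ k, ∏ m ∈ Icc m₀ k, g m ≠ 0 := fun k ↦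
    prod_ne_zero_iff.2 fun m hm ↦ hg m (mem_Icc.1 hm).1
  have hsplit : ∀ k ∈ Icc m₀ (n - 1),
      ∏ m ∈ Icc (k + 1) (n - 1), g m = (∏ m ∈ Icc m₀ (n - 1), g m) / ∏ m ∈ Icc m₀ k, g m := by
    intro k hk
    obtain ⟨hk₀, hkn⟩ := mem_Icc.1 hk
    rw [eq_div_iff (hprod k), mul_comm]
    exact prod_Icc_mul_prod_Icc_add_one g (by omega) hkn
  have hIcc : Icc m₀ (n - 1) = (range n).filter (m₀ ≤ ·) := by
    ext k
    simp only [mem_Icc, mem_filter, mem_range]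
    omega
  rw [sum_congr rfl fun k hk ↦ by rw [hsplit k hk], ← sum_filter, ← hIcc, mul_sum]
  refine sum_congr rfl fun k _ ↦ ?_
  have := hprod k
  rw [div_pow]
  field_simp

theorem tendsto_comp_sub_one_mul_rpow {u : ℕ → ℝ} {q C : ℝ}
    (hu : Tendsto (fun k : ℕ ↦ u k * (k : ℝ) ^ q) atTop (𝓝 C)) :
    Tendsto (fun n : ℕ ↦ u (n - 1) * (n : ℝ) ^ q) atTop (𝓝 C) := by
  rw [← tendsto_add_atTop_iff_nat 1]
  have h := hu.mul ((tendsto_natCast_add_div_natCast 1).rpow_const (p := q) (Or.inl one_ne_zero))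
  rw [Real.one_rpow, mul_one] at h
  refine h.congr' ?_
  filter_upwards [eventually_gt_atTop 0] with n hn
  have hn : (0 : ℝ) < n := by exact_mod_cast hn
  rw [Nat.add_sub_cancel, Real.div_rpow (by positivity) hn.le]
  push_cast
  field_simp

theorem tendsto_inv_rpow_div_sq_div_rpow {u : ℕ → ℝ} {q C : ℝ}
    (hu : Tendsto (fun k : ℕ ↦ u k * (k : ℝ) ^ q) atTop (𝓝 C)) (hC : C ≠ 0) (a : ℝ) :
    Tendsto (fun k : ℕ ↦ ((k : ℝ) ^ a)⁻¹ / u k ^ 2 / (k : ℝ) ^ (2 * q - a)) atTop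
      (𝓝 (C ^ 2)⁻¹) := by
  refine ((hu.pow 2).inv₀ (pow_ne_zero 2 hC)).congr' ?_
  filter_upwards [eventually_gt_atTop 0] with k hk
  have hk : (0 : ℝ) < k := by exact_mod_cast hk
  have hpow : (k : ℝ) ^ a * (k : ℝ) ^ (2 * q - a) = ((k : ℝ) ^ q) ^ 2 := by
    rw [← Real.rpow_add hk, ← Real.rpow_mul_natCast hk.le]
    ring_nf
  rw [mul_pow, ← hpow]
  field_simp

theorem stmt19_general (γ c q : ℝ) (hγ₂ : γ < 1) (hq : 1 / 2 < q)
    (m₀ : ℕ) (hm₀ : 2 ≤ m₀)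
    (hsmall : ∀ m : ℕ, m₀ ≤ m → q / (m : ℝ) < 1) :
    Tendsto (fun n : ℕ => (n : ℝ) ^ (2 * γ - 1) *
        ∑ k ∈ Icc m₀ (n - 1),
          c ^ 2 * ((k : ℝ) ^ (2 * γ))⁻¹ *
            (∏ m ∈ Icc (k + 1) (n - 1), (1 - q / (m : ℝ))) ^ 2)
      atTop (nhds (c ^ 2 / (2 * q - (2 * γ - 1)))) := by
  have hqm : q < m₀ := (div_lt_one (by positivity)).1 (hsmall m₀ le_rfl)
  set C : ℝ := (m₀ - 1)! / Real.Gamma (m₀ - q)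
  have hC : 0 < C := div_pos (by positivity) (Real.Gamma_pos_of_pos (sub_pos.2 hqm))
  have hP := tendsto_prod_Icc_one_sub_div_mul_rpow (by omega) hqm
  have hsummand : Tendsto (fun k : ℕ ↦ (if m₀ ≤ k then c ^ 2 * ((k : ℝ) ^ (2 * γ))⁻¹ /
      (∏ m ∈ Icc m₀ k, (1 - q / (m : ℝ))) ^ 2 else 0) / (k : ℝ) ^ (2 * q - 2 * γ))
      atTop (𝓝 (c ^ 2 * (C ^ 2)⁻¹)) := by
    refine ((tendsto_inv_rpow_div_sq_div_rpow hP hC.ne' (2 * γ)).const_mul (c ^ 2)).congr' ?_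
    filter_upwards [eventually_ge_atTop m₀] with k hk
    rw [if_pos hk]
    ring
  have hsum := tendsto_sum_range_div_rpow_of_tendsto_div_rpow (by linarith) hsummand
  have hlim : C ^ 2 * (c ^ 2 * (C ^ 2)⁻¹ / (2 * q - 2 * γ + 1)) = c ^ 2 / (2 * q - (2 * γ - 1)) := by
    field_simp
    ring
  rw [← hlim]
  refine (((tendsto_comp_sub_one_mul_rpow hP).pow 2).mul hsum).congr' ?_
  filter_upwards [eventually_gt_atTop 0] with n hn
  have hn : (0 : ℝ) < n := by exact_mod_cast hn
  have hpow : (n : ℝ) ^ (2 * γ - 1) * (n : ℝ) ^ (2 * q - 2 * γ + 1) = ((n : ℝ) ^ q) ^ 2 := by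
    rw [← Real.rpow_add hn, ← Real.rpow_mul_natCast hn.le]
    ring_nf
  rw [sum_Icc_mul_prod_Icc_pow 2 (fun m hm ↦ (sub_pos.2 (hsmall m hm)).ne') (by exact_mod_cast hn),
    mul_pow, ← hpow]
  field_simp

theorem stmt19 (γ c q : ℝ) (hγ₁ : 1 / 2 < γ) (hγ₂ : γ < 1) (hc : 0 < c) (hq : 1 / 2 < q)
    (m₀ : ℕ) (hm₀ : 2 ≤ m₀)
    (hsmall : ∀ m : ℕ, m₀ ≤ m → q / (m : ℝ) < 1) :
    Tendsto (fun n : ℕ => (n : ℝ) ^ (2 * γ - 1) *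
        ∑ k ∈ Icc m₀ (n - 1),
          c ^ 2 * ((k : ℝ) ^ (2 * γ))⁻¹ *
            (∏ m ∈ Icc (k + 1) (n - 1), (1 - q / (m : ℝ))) ^ 2)
      atTop (nhds (c ^ 2 / (2 * q - (2 * γ - 1)))) :=
  stmt19_general γ c q hγ₂ hq m₀ hm₀ hsmall
end
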